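/- In the setting of the previous splitting j: Ĥ ≅ V^♯: if τ is a group automorphism of Ĥ preserving Z, preserving the decomposition in the weaker sense that τ(W₁) ⊆ {x₁x₂ : x₁ ∈ W₁, x₂ ∈ W₂, κ(π(x₁),π(x₂)) = 0} and likewise τ(W₂) ⊆ {y₁y₂ : κ(π(y₁),π(y₂)) = 0, and additionally κ(π(x₁),π(y₁)) = κ(π(x₂),π(y₂)) = 0 for the components arising from a common element}, then j is τ-equivariant: j(τ(h)) = τ(j(h)) for all h ∈ Ĥ, where τ acts on V^♯ = V × Z componentwise. -/
import Mathlib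


/-- The commutator `[x,y] = x y x⁻¹ y⁻¹`. -/
def grpComm {H : Type*} [Group H] (x y : H) : H := x * y * x⁻¹ * y⁻¹

section
variable {H : Type*} [Group H] {Z : Subgroup H} (hZ : Z ≤ Subgroup.center H)
  (hcomm : ∀ x y : H, grpComm x y ∈ Z)

include hZ hcomm

lemma grpComm_central (a b g : H) : g * grpComm a b = grpComm a b * g :=
  Subgroup.mem_center_iff.mp (hZ (hcomm a b)) g

omit hZ hcomm in
lemma grpComm_inv (a b : H) : grpComm b a = (grpComm a b)⁻¹ := by
  unfold grpComm; group

lemma grpComm_mul_left (a b c : H) :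
    grpComm (a * b) c = grpComm a c * grpComm b c := by
  have hc := grpComm_central hZ hcomm b c
  have key : b * c = grpComm b c * c * b := by unfold grpComm; group
  calc grpComm (a*b) c = a * (b*c) * b⁻¹ * a⁻¹ * c⁻¹ := by unfold grpComm; group
    _ = a * (grpComm b c * c * b) * b⁻¹ * a⁻¹ * c⁻¹ := by rw [key]
    _ = a * grpComm b c * (c * a⁻¹ * c⁻¹) := by group
    _ = grpComm b c * a * (c * a⁻¹ * c⁻¹) := by rw [hc a]
    _ = grpComm b c * grpComm a c := by unfold grpComm; group
    _ = grpComm a c * grpComm b c := grpComm_central hZ hcomm a c _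

lemma grpComm_mul_right (a b c : H) :
    grpComm a (b * c) = grpComm a b * grpComm a c := by
  rw [grpComm_inv, grpComm_mul_left hZ hcomm, mul_inv_rev,
    ← grpComm_inv, ← grpComm_inv]
  exact grpComm_central hZ hcomm a b _

end


/-- In the Heisenberg-splitting setting `j : Ĥ ≅ V^♯`,
`j(g) = (π(g), σ(g))`: if `τ` is an automorphism of `Ĥ` stabilizing `Z` such
that for all `w₁ ∈ W₁`, `w₂ ∈ W₂` one can write `τ(w₁) = x₁x₂`, `τ(w₂) = y₁y₂`
with `xᵢ, yᵢ ∈ Wᵢ` and `κ(x₁,x₂) = κ(y₁,y₂) = κ(x₁,y₁) = κ(x₂,y₂) = 1`, then `j`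
is `τ`-equivariant (for the componentwise action of `τ` on `V^♯ = V × Z`), i.e.
`σ ∘ τ = τ ∘ σ` (the first components agree automatically). -/
theorem heisenberg_splitting_equivariant
    (H : Type*) [Group H] (Z W₁ W₂ : Subgroup H)
    (hZ : Z ≤ Subgroup.center H)
    (hW₁comm : ∀ a ∈ W₁, ∀ b ∈ W₁, a * b = b * a)
    (hW₂comm : ∀ a ∈ W₂, ∀ b ∈ W₂, a * b = b * a)
    (hW₁Z : W₁ ⊓ Z = ⊥) (hW₂Z : W₂ ⊓ Z = ⊥)
    (hfact : ∀ g : H, ∃! w : W₁ × W₂ × Z, g = (w.1 : H) * (w.2.1 : H) * (w.2.2 : H))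
    (hcomm : ∀ x y : H, grpComm x y ∈ Z)
    (half : Z → Z) (hhalf : ∀ z : Z, half z * half z = z)
    (hinj2 : ∀ z w : Z, z * z = w * w → z = w)
    (σ : H → Z)
    (hσ : ∀ (w₁ : W₁) (w₂ : W₂) (z : Z),
      σ ((w₁ : H) * (w₂ : H) * (z : H)) =
        z * half ⟨grpComm (w₁ : H) (w₂ : H), hcomm _ _⟩)
    (τ : H ≃* H)
    (hτZ : ∀ z ∈ Z, τ z ∈ Z) (hτZ' : ∀ z ∈ Z, τ.symm z ∈ Z)
    (hdec : ∀ (w₁ : W₁) (w₂ : W₂), ∃ (x₁ y₁ : W₁) (x₂ y₂ : W₂),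
      τ (w₁ : H) = (x₁ : H) * (x₂ : H) ∧ τ (w₂ : H) = (y₁ : H) * (y₂ : H) ∧
      grpComm (x₁ : H) (x₂ : H) = 1 ∧ grpComm (y₁ : H) (y₂ : H) = 1 ∧
      grpComm (x₁ : H) (y₁ : H) = 1 ∧ grpComm (x₂ : H) (y₂ : H) = 1) :
    ∀ g : H, (σ (τ g) : H) = τ (σ g : H) := by
  intro g
  obtain ⟨⟨w₁, w₂, z⟩, hg, -⟩ := hfact g
  obtain ⟨x₁, y₁, x₂, y₂, hx, hy, hxx, hyy, hx1y1, hx2y2⟩ := hdec w₁ w₂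
  -- central elements commute with everything
  have cent : ∀ u ∈ Z, ∀ a b : H, a * (u * b) = u * (a * b) := by
    intro u hu a b
    rw [← mul_assoc, Subgroup.mem_center_iff.mp (hZ hu) a, mul_assoc]
  have cent' : ∀ u ∈ Z, ∀ a : H, a * u = u * a := by
    intro u hu a; exact Subgroup.mem_center_iff.mp (hZ hu) a
  -- the shifted Z-part of τ g
  set c' : Z := ⟨grpComm (x₂ : H) (y₁ : H), hcomm _ _⟩ with hc'
  set z'' : Z := c' * ⟨τ (z : H), hτZ _ z.2⟩ with hz''
  have hτg : τ g = ((x₁ * y₁ : W₁) : H) * ((x₂ * y₂ : W₂) : H) * (z'' : H) := by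
    rw [hg, map_mul, map_mul, hx, hy]
    push_cast
    have key : (x₂ : H) * (y₁ : H) = (c' : H) * ((y₁ : H) * (x₂ : H)) := by
      simp only [hc']; unfold grpComm; group
    calc (x₁ : H) * x₂ * ((y₁ : H) * y₂) * τ (z : H)
        = (x₁ : H) * (((x₂ : H) * y₁) * ((y₂ : H) * τ (z : H))) := by group
      _ = (x₁ : H) * (((c' : H) * ((y₁ : H) * x₂)) * ((y₂ : H) * τ (z : H))) := by
          rw [key]
      _ = (x₁ : H) * ((c' : H) * (((y₁ : H) * x₂) * ((y₂ : H) * τ (z : H)))) := by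
          group
      _ = (c' : H) * ((x₁ : H) * (((y₁ : H) * x₂) * ((y₂ : H) * τ (z : H)))) := by
          rw [cent _ c'.2]
      _ = (x₁ : H) * y₁ * ((x₂ : H) * y₂) * ((c' : H) * τ (z : H)) := by
          rw [cent _ c'.2 ((x₁ : H) * y₁ * ((x₂ : H) * y₂)) (τ (z : H))]; group
  -- commutator of the recombined parts
  have hd : grpComm ((x₁ * y₁ : W₁) : H) ((x₂ * y₂ : W₂) : H)
      = grpComm (x₁ : H) (y₂ : H) * (grpComm (x₂ : H) (y₁ : H))⁻¹ := by
    push_cast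
    rw [grpComm_mul_left hZ hcomm, grpComm_mul_right hZ hcomm,
      grpComm_mul_right hZ hcomm, hxx, hyy, grpComm_inv (x₂ : H) (y₁ : H)]
    group
  -- image of the original commutator
  have hτc : τ (grpComm (w₁ : H) (w₂ : H))
      = grpComm (x₁ : H) (y₂ : H) * grpComm (x₂ : H) (y₁ : H) := by
    have : τ (grpComm (w₁ : H) (w₂ : H)) = grpComm (τ (w₁ : H)) (τ (w₂ : H)) := by
      unfold grpComm; simp [map_mul]
    rw [this, hx, hy, grpComm_mul_left hZ hcomm, grpComm_mul_right hZ hcomm,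
      grpComm_mul_right hZ hcomm, hx1y1, hx2y2]
    group
  -- the key identity between Z-elements, via squares
  have key2 : (c' : H) * (half ⟨grpComm ((x₁ * y₁ : W₁) : H) ((x₂ * y₂ : W₂) : H),
        hcomm _ _⟩ : H)
      = τ ((half ⟨grpComm (w₁ : H) (w₂ : H), hcomm _ _⟩ : Z) : H) := by
    set D : Z := ⟨grpComm ((x₁ * y₁ : W₁) : H) ((x₂ * y₂ : W₂) : H), hcomm _ _⟩
    set C : Z := ⟨grpComm (w₁ : H) (w₂ : H), hcomm _ _⟩
    have sq : (c' * half D) * (c' * half D) = ⟨τ ((half C : Z) : H), hτZ _ (half C).2⟩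
        * ⟨τ ((half C : Z) : H), hτZ _ (half C).2⟩ := by
      apply Subtype.ext
      push_cast
      have h1 : ((half D : Z) : H) * ((half D : Z) : H) = (D : H) := by
        exact_mod_cast congrArg (Subtype.val) (hhalf D)
      have h2 : τ ((half C : Z) : H) * τ ((half C : Z) : H) = τ (C : H) := by
        rw [← map_mul]
        exact congrArg τ (by exact_mod_cast congrArg (Subtype.val) (hhalf C))
      have swap : ((half D : Z) : H) * (c' : H) = (c' : H) * ((half D : Z) : H) :=
        cent' _ c'.2 _
      have swap2 : grpComm (x₁ : H) (y₂ : H) * (grpComm (x₂ : H) (y₁ : H))⁻¹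
          = (grpComm (x₂ : H) (y₁ : H))⁻¹ * grpComm (x₁ : H) (y₂ : H) :=
        cent' _ (inv_mem (hcomm _ _)) _
      calc (c' : H) * ((half D : Z) : H) * ((c' : H) * ((half D : Z) : H))
          = (c' : H) * (((half D : Z) : H) * (c' : H)) * ((half D : Z) : H) := by
            group
        _ = (c' : H) * ((c' : H) * ((half D : Z) : H)) * ((half D : Z) : H) := by
            rw [swap]
        _ = (c' : H) * (c' : H) * (((half D : Z) : H) * ((half D : Z) : H)) := by
            group
        _ = (c' : H) * (c' : H) * (D : H) := by rw [h1]
        _ = τ (C : H) := by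
            show grpComm (x₂ : H) (y₁ : H) * grpComm (x₂ : H) (y₁ : H) * (D : H)
              = τ (C : H)
            have hD : (D : H) = grpComm (x₁ : H) (y₂ : H)
                * (grpComm (x₂ : H) (y₁ : H))⁻¹ := hd
            have hC : τ (C : H) = grpComm (x₁ : H) (y₂ : H)
                * grpComm (x₂ : H) (y₁ : H) := hτc
            rw [hD, hC, swap2,
              cent' _ (hcomm (x₂ : H) (y₁ : H)) (grpComm (x₁ : H) (y₂ : H))]
            group
        _ = τ ((half C : Z) : H) * τ ((half C : Z) : H) := h2.symm
    have h3 := congrArg (Subtype.val) (hinj2 _ _ sq)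
    push_cast at h3
    exact h3
  -- put everything together
  conv_lhs => rw [hτg, hσ]
  conv_rhs => rw [hg, hσ]
  simp only [Subgroup.coe_mul, map_mul]
  rw [← key2]
  show (c' : H) * τ (z : H) * _ = _
  rw [mul_assoc, cent _ (hτZ _ z.2)]
  rfl
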